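/- arXiv:2601.20815 — 3 statements merged into one kernel-verified Lean document; each statement's English description precedes it below -/
import Mathlib

section
/- Let V be a nonempty finite set, r a real with 0 < r < 1, and λ > 0. For every hard nonempty score function p : V → {r,1} and every q ∈ (0,1], the per-sample GSAT objective satisfies −log q + λ·K(p) ≥ λ·log(1/r). Equality holds if and only if q = 1 and exactly one node u ∈ V has p(u) = 1. -/
/-- The GSAT regularizer of a score function `p` on a finite node set `V`
with prior `r ∈ (0,1)`, with the convention `0 · log 0 = 0`
(automatic in Lean since `Real.log 0 = 0`). -/
noncomputable def gsatReg {V : Type*} [Fintype V] (r : ℝ) (p : V → ℝ) : ℝ :=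
  ∑ u, (p u * Real.log (p u / r) + (1 - p u) * Real.log ((1 - p u) / (1 - r)))

/-- The per-sample GSAT objective `−log q + λ·K(p)` of any hard nonempty score
function `p : V → {r,1}` and any true-label probability `q ∈ (0,1]` is at least
`λ·log(1/r)`, with equality iff `q = 1` and exactly one node is scored `1`. -/
theorem gsat_objective_lower_bound {V : Type*} [Fintype V] [Nonempty V]
    (r lam : ℝ) (hr0 : 0 < r) (hr1 : r < 1) (hlam : 0 < lam)
    (p : V → ℝ) (hp : ∀ u, p u = r ∨ p u = 1) (hne : ∃ u, p u = 1)
    (q : ℝ) (hq0 : 0 < q) (hq1 : q ≤ 1) :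
    lam * Real.log (1 / r) ≤ -Real.log q + lam * gsatReg r p ∧
    (-Real.log q + lam * gsatReg r p = lam * Real.log (1 / r) ↔
      q = 1 ∧ ∃! u, p u = 1) := by
  classical
  set L := Real.log (1 / r) with hL
  have hLpos : 0 < L := Real.log_pos (by rw [lt_div_iff₀ hr0]; linarith)
  set S := Finset.univ.filter (fun u => p u = 1) with hS
  have hreg : gsatReg r p = S.card * L := by
    have h1 : gsatReg r p = ∑ u, (if p u = 1 then L else 0) := by
      unfold gsatReg
      refine Finset.sum_congr rfl (fun u _ => ?_)
      rcases hp u with h | h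
      · rw [h, if_neg (by linarith), div_self (ne_of_gt hr0),
          div_self (by linarith : (1:ℝ) - r ≠ 0), Real.log_one]
        ring
      · rw [h, if_pos rfl]
        simp [hL]
    rw [h1, ← Finset.sum_filter, ← hS, Finset.sum_const, nsmul_eq_mul]
  have hcard : 1 ≤ S.card := by
    obtain ⟨u, hu⟩ := hne
    exact Finset.card_pos.mpr ⟨u, by simp [hS, hu]⟩
  have hcardR : (1:ℝ) ≤ S.card := by exact_mod_cast hcard
  have hlogq : Real.log q ≤ 0 := Real.log_nonpos (le_of_lt hq0) hq1
  constructor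
  · rw [hreg]
    nlinarith [mul_pos hlam hLpos]
  · rw [hreg]
    constructor
    · intro h
      have h1 : -Real.log q + lam * ((S.card : ℝ) - 1) * L = 0 := by
        nlinarith
      have hterm : 0 ≤ lam * ((S.card : ℝ) - 1) * L := by
        have : (0:ℝ) ≤ (S.card : ℝ) - 1 := by linarith
        positivity
      have hq : Real.log q = 0 := by linarith
      have hqe : q = 1 := by
        rcases Real.log_eq_zero.mp hq with h | h | h <;> linarith
      have hc : (S.card : ℝ) = 1 := by
        have := mul_pos hlam hLpos
        have h2 : lam * ((S.card : ℝ) - 1) * L = 0 := by linarith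
        rcases mul_eq_zero.mp h2 with h3 | h3
        · rcases mul_eq_zero.mp h3 with h4 | h4 <;> [linarith; linarith]
        · linarith
      have hc1 : S.card = 1 := by exact_mod_cast hc
      obtain ⟨a, ha⟩ := Finset.card_eq_one.mp hc1
      refine ⟨hqe, a, ?_, ?_⟩
      · have : a ∈ S := ha ▸ Finset.mem_singleton_self a
        simpa [hS] using this
      · intro b hb
        have : b ∈ S := by simp [hS, hb]
        rw [ha, Finset.mem_singleton] at this
        exact this
    · rintro ⟨hq, u, hu, huniq⟩
      have hSu : S = {u} := by
        ext v
        simp only [hS, Finset.mem_filter, Finset.mem_univ, true_and,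
          Finset.mem_singleton]
        exact ⟨fun h => huniq v h, fun h => h ▸ hu⟩
      rw [hq, hSu]
      simp
end

section
/- Consider a finite dataset of samples indexed by a nonempty finite index set I, where sample i consists of a nonempty finite node set V_i, a feature map x_i : V_i → X, and a label y_i ∈ Y (Y a finite type). Suppose there is an injective map χ : Y → X of anchor features such that every sample i contains at least one node u ∈ V_i with x_i(u) = χ(y) for every y ∈ Y. Fix r ∈ (0,1) and λ > 0. Then: (a) choosing for each sample i the hard score function p_i that assigns score 1 to exactly one node with feature χ(y_i) and score r to all other nodes, together with the classifier that on explanation {χ(y)} predicts label y with probability 1, yields per-sample GSAT objective λ·log(1/r) for every sample, hence average objective λ·log(1/r) over the dataset; and (b) for every choice of hard nonempty score functions p_i : V_i → {r,1} and every assignment of true-label probabilities q_i ∈ (0,1], the average of −log q_i + λ·K(p_i) over i ∈ I is at least λ·log(1/r). Consequently the anchor-node SE-GNN of (a) achieves optimal true risk for the GSAT (and LRI, GMT) objective. -/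
lemma gsat_term_r {r : ℝ} (hr0 : 0 < r) (hr1 : r < 1) :
    r * Real.log (r / r) + (1 - r) * Real.log ((1 - r) / (1 - r)) = 0 := by
  rw [div_self hr0.ne', div_self (by linarith : (1:ℝ) - r ≠ 0), Real.log_one]; ring

lemma gsat_term_one (r : ℝ) :
    (1:ℝ) * Real.log (1 / r) + (1 - 1) * Real.log ((1 - 1) / (1 - r)) = Real.log (1 / r) := by
  norm_num

lemma gsatReg_of_unique {V : Type*} [Fintype V] {r : ℝ} (hr0 : 0 < r) (hr1 : r < 1)
    (p : V → ℝ) (hhard : ∀ u, p u = r ∨ p u = 1)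
    (u₀ : V) (h1 : p u₀ = 1) (huniq : ∀ v, p v = 1 → v = u₀) :
    gsatReg r p = Real.log (1 / r) := by
  unfold gsatReg
  rw [Fintype.sum_eq_single u₀]
  · rw [h1]; exact gsat_term_one r
  · intro v hv
    rcases hhard v with h | h
    · rw [h]; exact gsat_term_r hr0 hr1
    · exact absurd (huniq v h) hv

lemma gsatReg_ge {V : Type*} [Fintype V] {r : ℝ} (hr0 : 0 < r) (hr1 : r < 1)
    (p : V → ℝ) (hhard : ∀ u, p u = r ∨ p u = 1)
    (hex : ∃ u, p u = 1) : Real.log (1 / r) ≤ gsatReg r p := by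
  obtain ⟨u₀, h1⟩ := hex
  have hlog : (0:ℝ) ≤ Real.log (1 / r) :=
    Real.log_nonneg (by rw [le_div_iff₀ hr0]; linarith)
  have hnn : ∀ u : V, (0:ℝ) ≤
      p u * Real.log (p u / r) + (1 - p u) * Real.log ((1 - p u) / (1 - r)) := by
    intro u
    rcases hhard u with h | h
    · rw [h, gsat_term_r hr0 hr1]
    · rw [h, gsat_term_one r]; exact hlog
  calc Real.log (1 / r)
      = p u₀ * Real.log (p u₀ / r) + (1 - p u₀) * Real.log ((1 - p u₀) / (1 - r)) := by
        rw [h1, gsat_term_one r]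
    _ ≤ gsatReg r p :=
        Finset.single_le_sum (fun u _ => hnn u) (Finset.mem_univ u₀)

/-- Anchor-node SE-GNNs achieve optimal true risk for the GSAT (LRI, GMT) objective.
(a) Scoring, in each sample `i`, exactly one node carrying the anchor feature
`χ(y i)` of the true label with `1` and all other nodes with `r`, and predicting
the true label with probability `q = 1` (so the cross-entropy loss is `−log 1`),
yields per-sample objective `λ·log(1/r)` and average objective `λ·log(1/r)`.
(b) Every choice of hard nonempty scores and true-label probabilities
`q i ∈ (0,1]` has average objective at least `λ·log(1/r)`. -/
theorem anchor_segnn_optimal_gsat {I X Y : Type*} [Fintype I] [Nonempty I] [Fintype Y]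
    (V : I → Type*) [∀ i, Fintype (V i)] [∀ i, Nonempty (V i)]
    (x : ∀ i, V i → X) (y : I → Y)
    (χ : Y → X) (hχ : Function.Injective χ)
    (hanchor : ∀ i, ∀ z : Y, ∃ u : V i, x i u = χ z)
    (r lam : ℝ) (hr0 : 0 < r) (hr1 : r < 1) (hlam : 0 < lam) :
    (∃ p : ∀ i, V i → ℝ,
        (∀ i, ∀ u, p i u = r ∨ p i u = 1) ∧
        (∀ i, ∃! u, p i u = 1) ∧
        (∀ i, ∀ u, p i u = 1 → x i u = χ (y i)) ∧
        (∀ i, -Real.log 1 + lam * gsatReg r (p i) = lam * Real.log (1 / r)) ∧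
        (1 / (Fintype.card I : ℝ)) *
            ∑ i, (-Real.log 1 + lam * gsatReg r (p i)) = lam * Real.log (1 / r)) ∧
    (∀ (p : ∀ i, V i → ℝ) (q : I → ℝ),
        (∀ i, ∀ u, p i u = r ∨ p i u = 1) →
        (∀ i, ∃ u, p i u = 1) →
        (∀ i, 0 < q i ∧ q i ≤ 1) →
        lam * Real.log (1 / r) ≤
          (1 / (Fintype.card I : ℝ)) *
            ∑ i, (-Real.log (q i) + lam * gsatReg r (p i))) := by
  have hcard : (0:ℝ) < (Fintype.card I : ℝ) := by
    exact_mod_cast Fintype.card_pos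
  constructor
  · classical
    set u₀ : ∀ i, V i := fun i => (hanchor i (y i)).choose with hu₀
    have hu₀x : ∀ i, x i (u₀ i) = χ (y i) := fun i => (hanchor i (y i)).choose_spec
    refine ⟨fun i v => if v = u₀ i then 1 else r, ?_, ?_, ?_, ?_, ?_⟩
    · intro i u; by_cases h : u = u₀ i <;> simp [h]
    · intro i
      refine ⟨u₀ i, by simp, fun v hv => ?_⟩
      by_cases h : v = u₀ i
      · exact h
      · simp [h] at hv; linarith
    · intro i u hu
      by_cases h : u = u₀ i
      · rw [h]; exact hu₀x i
      · simp [h] at hu; linarith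
    · intro i
      have := gsatReg_of_unique hr0 hr1 (fun v => if v = u₀ i then 1 else r)
        (fun u => by by_cases h : u = u₀ i <;> simp [h]) (u₀ i) (by simp)
        (fun v hv => by
          by_cases h : v = u₀ i
          · exact h
          · simp [h] at hv; linarith)
      rw [this]; simp
    · have heach : ∀ i : I, -Real.log 1 + lam * gsatReg r
          (fun v => if v = u₀ i then 1 else r) = lam * Real.log (1 / r) := by
        intro i
        have := gsatReg_of_unique hr0 hr1 (fun v => if v = u₀ i then 1 else r)
          (fun u => by by_cases h : u = u₀ i <;> simp [h]) (u₀ i) (by simp)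
          (fun v hv => by
            by_cases h : v = u₀ i
            · exact h
            · simp [h] at hv; linarith)
        rw [this]; simp
      rw [Finset.sum_congr rfl (fun i _ => heach i), Finset.sum_const, nsmul_eq_mul,
        Finset.card_univ]
      field_simp
  · intro p q hhard hex hq
    have hbound : ∀ i : I, lam * Real.log (1 / r) ≤
        -Real.log (q i) + lam * gsatReg r (p i) := by
      intro i
      have h1 : Real.log (q i) ≤ 0 := Real.log_nonpos (hq i).1.le (hq i).2
      have h2 : Real.log (1 / r) ≤ gsatReg r (p i) :=
        gsatReg_ge hr0 hr1 (p i) (hhard i) (hex i)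
      nlinarith
    have hsum : (Fintype.card I : ℝ) * (lam * Real.log (1 / r)) ≤
        ∑ i, (-Real.log (q i) + lam * gsatReg r (p i)) := by
      calc (Fintype.card I : ℝ) * (lam * Real.log (1 / r))
          = ∑ _i : I, lam * Real.log (1 / r) := by
            rw [Finset.sum_const, nsmul_eq_mul, Finset.card_univ]
        _ ≤ _ := Finset.sum_le_sum (fun i _ => hbound i)
    have := mul_le_mul_of_nonneg_left hsum (le_of_lt (one_div_pos.mpr hcard))
    calc lam * Real.log (1 / r)
        = (1 / (Fintype.card I : ℝ)) * ((Fintype.card I : ℝ) * (lam * Real.log (1 / r))) := by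
          field_simp
      _ ≤ _ := this
end

section
/- In the setting of the anchor-node GSAT construction, let Y be a finite type of labels, and for each sample i let y_i ∈ Y be the true label and suppose the extractor/classifier pair (e, g) is defined by e(i) = χ(y_i) and g(χ(y)) = y, which predicts correctly on every sample. Then for every permutation π : Y ≃ Y, the pair (e_π, g_π) defined by e_π(i) = χ(π(y_i)) and g_π(χ(y)) = π⁻¹(y) also satisfies g_π(e_π(i)) = y_i for every sample i, and attains the same per-sample GSAT objective value λ·log(1/r) (with the classifier predicting its output label with probability 1 and the hard extractor scoring exactly one anchor node with 1 and all other nodes with r). In particular, when π is not the identity, the two SE-GNNs output different explanations on some class while being equally optimal, so explanations fail to be consistent. -/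
/-- Permuted anchor SE-GNNs are equally optimal, so explanations are inconsistent.
Given the anchor extractor/classifier pair `e i = χ (y i)`, `g (χ z) = z`
(which predicts correctly on every sample), and a permutation `π` of labels,
the permuted pair `e_π i = χ (π (y i))`, `g_π = π⁻¹ ∘ g` also predicts correctly
on every sample; any hard score function marking exactly one node (with `1` and
all others with `r`) together with a classifier predicting its output label with
probability 1 attains the same per-sample GSAT objective `λ·log(1/r)`; and when
`π` is not the identity the two SE-GNNs output different explanations on some
class. -/
theorem permuted_anchor_segnn_equally_optimal {X Y : Type*} [Fintype Y] {I : Type*}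
    (χ : Y → X) (hχ : Function.Injective χ)
    (y : I → Y) (g : X → Y) (hg : ∀ z : Y, g (χ z) = z)
    (hcorrect : ∀ i, g (χ (y i)) = y i)
    (π : Equiv.Perm Y)
    (r lam : ℝ) (hr0 : 0 < r) (hr1 : r < 1) (hlam : 0 < lam) :
    (∀ i, π.symm (g (χ (π (y i)))) = y i) ∧
    (∀ (V : Type) [Fintype V] (p : V → ℝ),
        (∀ u, p u = r ∨ p u = 1) → (∃! u, p u = 1) →
        -Real.log 1 + lam * gsatReg r p = lam * Real.log (1 / r)) ∧
    (π ≠ Equiv.refl Y → ∃ z : Y, χ (π z) ≠ χ z) := by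
  refine ⟨fun i => by rw [hg, Equiv.symm_apply_apply], ?_, ?_⟩
  · intro V _ p hval huniq
    obtain ⟨u0, hu0, huu⟩ := huniq
    have hreg : gsatReg r p = Real.log (1 / r) := by
      unfold gsatReg
      rw [Finset.sum_eq_single u0]
      · rw [hu0]
        simp [Real.log_div one_ne_zero (ne_of_gt hr0)]
      · intro u _ hne
        have : p u = r := by
          rcases hval u with h | h
          · exact h
          · exact absurd (huu u h) hne
        rw [this]
        simp [ne_of_gt hr0, ne_of_gt (sub_pos.mpr hr1)]
      · intro h; exact absurd (Finset.mem_univ u0) h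
    rw [hreg, Real.log_one]
    ring
  · intro hne
    by_contra h
    push_neg at h
    apply hne
    ext z
    exact hχ (h z)
end
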